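/- Weakly ramified generator count: let p be prime, n ≥ 1, 2 ≤ h < 1 + p^n/2, m = h−1, k = p^n − m. Define d(s) = [s ≥ m], w(s) = [s ≥ k], and 𝔇 = { u ∈ {0,...,p^n−1} : d(u) > d(u−s) + w(s) for all s with 0 ≺ s ⪯ u }. Then |𝔇| = 2 + α(m) − β(m), where α(m) is the number of indices j with v_p(m) < j ≤ n−1 and the j-th base-p digit of m is not p−1, and β(m) is the largest c with 0 ≤ c < n − v_p(m) such that the digits m_{(n−1)} = ... = m_{(n−c)} = (p−1)/2. -/

import Mathlib

/-!
A nonzero `u` in the set satisfies `m ≤ u < k` (take `s = u`) and `u - p^t < m` for `t = v_p(u)`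
(take `s = p^t ⪯ u`), so `u` is the least multiple of `p^t` that is `≥ m`; conversely every such
`u < k` qualifies, since each nonzero `s ⪯ u` is a multiple of `p^t`.

The least multiple of `p^t` above `m` has valuation exactly `t` iff the digit `(m-1)_{(t)}` is not
`p-1`. It reaches `k` iff `p^t ∤ m` and `2⌊m/p^t⌋ + 1 = p^(n-t)`, i.e. iff `t > v_p(m)` and the
digits of `m` in positions `t, …, n-1` all equal `(p-1)/2`, which happens exactly for
`t ≥ n - β(m)`. So the nonzero elements correspond to the `t < n - β(m)` with `(m-1)_{(t)} ≠ p-1`.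
Below `v_p(m)` these digits are `p-1`, at `v_p(m)` it is not, and above `v_p(m)` they agree with
those of `m`; the top `β(m)` of them equal `(p-1)/2`. This leaves `1 + α(m) - β(m)` values of `t`.
-/

/-- The `i`-th base-`p` digit of `s`. -/
def dig (p s i : ℕ) : ℕ := s / p ^ i % p

/-- Digitwise partial order on base-`p` expansions: `s ⪯ t`. -/
def preceq (p s t : ℕ) : Prop := ∀ i, dig p s i ≤ dig p t i

/-- `α(m)`: the number of indices `j` with `v_p(m) < j ≤ n−1` whose base-`p` digit of `m`
is not `p−1`. -/
def alphaCount (p n m : ℕ) : ℕ :=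
  ((Finset.Ioc (padicValNat p m) (n - 1)).filter (fun j => dig p m j ≠ p - 1)).card

/-- `β(m)`: the largest `c` with `0 ≤ c < n − v_p(m)` such that the digits
`m_{(n−1)}, …, m_{(n−c)}` all equal `(p−1)/2` (taken to be `0` when `p = 2`). -/
def betaCount (p n m : ℕ) : ℕ :=
  if p = 2 then 0 else
    Nat.findGreatest (fun c => c < n - padicValNat p m ∧
      ∀ j, n - c ≤ j → j ≤ n - 1 → dig p m j = (p - 1) / 2) n

open Finset

section Digits

lemma dig_div_pow (p s t i : ℕ) : dig p (s / p ^ t) i = dig p s (t + i) := by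
  rw [dig, dig, Nat.div_div_eq_div_mul, ← pow_add]

lemma dig_zero (p s : ℕ) : dig p s 0 = s % p := by
  simp [dig]

lemma dig_succ (p s i : ℕ) : dig p s (i + 1) = dig p (s / p) i := by
  simpa [add_comm] using (dig_div_pow p s 1 i).symm

lemma pow_dvd_iff_forall_dig_eq_zero {p t u : ℕ} :
    p ^ t ∣ u ↔ ∀ i < t, dig p u i = 0 := by
  induction t generalizing u with
  | zero => simp
  | succ t ih =>
    simp only [Nat.forall_lt_succ_left, dig_zero, ← Nat.dvd_iff_mod_eq_zero, dig_succ, ← ih]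
    constructor
    · intro h
      have hpu : p ∣ u := (dvd_pow_self p t.succ_ne_zero).trans h
      exact ⟨hpu, (Nat.dvd_div_iff_mul_dvd hpu).2 (by rwa [← pow_succ'])⟩
    · rintro ⟨hpu, h⟩
      rw [pow_succ']
      exact (Nat.dvd_div_iff_mul_dvd hpu).1 h

lemma le_of_preceq {p s u : ℕ} (hp : 1 < p) (h : preceq p s u) : s ≤ u := by
  induction s using Nat.strong_induction_on generalizing u with
  | _ s ih =>
    rcases Nat.eq_zero_or_pos s with rfl | hs
    · exact Nat.zero_le u
    have hdiv : s / p ≤ u / p :=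
      ih _ (Nat.div_lt_self hs hp) fun i => by simpa only [dig_succ] using h (i + 1)
    have hmod : s % p ≤ u % p := by simpa only [dig_zero] using h 0
    have := Nat.mul_le_mul_left p hdiv
    have := Nat.div_add_mod s p
    have := Nat.div_add_mod u p
    omega

lemma pow_dvd_of_preceq {p t s u : ℕ} (h : preceq p s u) (hu : p ^ t ∣ u) :
    p ^ t ∣ s := by
  rw [pow_dvd_iff_forall_dig_eq_zero] at hu ⊢
  exact fun i hi => Nat.eq_zero_of_le_zero (hu i hi ▸ h i)

lemma preceq_pow_padicValNat {p u : ℕ} (hp : p.Prime) (hu : u ≠ 0) :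
    preceq p (p ^ padicValNat p u) u := by
  have : Fact p.Prime := ⟨hp⟩
  intro i
  rcases lt_trichotomy i (padicValNat p u) with hlt | heq | hgt
  · rw [(pow_dvd_iff_forall_dig_eq_zero).1 dvd_rfl i hlt]
    exact Nat.zero_le _
  · have hdig : dig p (p ^ i) i = 1 := by
      rw [dig, Nat.div_self (pow_pos hp.pos _), Nat.mod_eq_of_lt hp.one_lt]
    rw [← heq, hdig, Nat.one_le_iff_ne_zero]
    intro h0
    apply pow_succ_padicValNat_not_dvd (p := p) hu
    rw [pow_dvd_iff_forall_dig_eq_zero, Nat.forall_lt_succ_right]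
    exact ⟨pow_dvd_iff_forall_dig_eq_zero.1 (pow_padicValNat_dvd (p := p)), heq ▸ h0⟩
  · rw [dig, Nat.div_eq_of_lt (Nat.pow_lt_pow_right hp.one_lt hgt), Nat.zero_mod]
    exact Nat.zero_le _

end Digits

def roundUp (q m : ℕ) : ℕ := q * (m ⌈/⌉ q)

section RoundUp

variable {q m u : ℕ}

lemma dvd_roundUp : q ∣ roundUp q m := dvd_mul_right _ _

lemma le_roundUp (hq : 0 < q) : m ≤ roundUp q m := (ceilDiv_le_iff_le_mul hq).1 le_rfl

lemma roundUp_le (hq : 0 < q) (hd : q ∣ u) (hmu : m ≤ u) : roundUp q m ≤ u := by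
  obtain ⟨c, rfl⟩ := hd
  exact Nat.mul_le_mul_left q ((ceilDiv_le_iff_le_mul hq).2 hmu)

lemma roundUp_lt_add (hq : 0 < q) : roundUp q m < m + q := by
  have := Nat.mul_div_le (m + q - 1) q
  rw [roundUp, Nat.ceilDiv_eq_add_pred_div]
  omega

lemma eq_roundUp (hq : 0 < q) (hd : q ∣ u) (h1 : m ≤ u) (h2 : u < m + q) : u = roundUp q m := by
  have hle := roundUp_le hq hd h1
  have hge := le_roundUp (m := m) hq
  have := Nat.eq_zero_of_dvd_of_lt (Nat.dvd_sub hd (dvd_roundUp (m := m))) (by omega)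
  omega

lemma roundUp_of_dvd (hq : 0 < q) (hd : q ∣ m) : roundUp q m = m :=
  (eq_roundUp hq hd le_rfl (by omega)).symm

lemma roundUp_eq_of_pos (hq : 0 < q) (hm : 0 < m) : roundUp q m = q * ((m - 1) / q + 1) := by
  rw [roundUp, Nat.ceilDiv_eq_add_pred_div, show m + q - 1 = m - 1 + q by omega,
    Nat.add_div_right _ hq]

lemma sub_one_div_of_not_dvd (h : ¬ q ∣ m) : (m - 1) / q = m / q := by
  obtain ⟨m, rfl⟩ := Nat.exists_eq_succ_of_ne_zero (n := m) (by rintro rfl; exact h (dvd_zero q))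
  simp [Nat.succ_div_of_not_dvd h]

end RoundUp

lemma le_roundUp_add_iff {q m N : ℕ} (hq : 0 < q) (hN : q ∣ N) (hmN : 2 * m < N) :
    N ≤ roundUp q m + m ↔ ¬ q ∣ m ∧ 2 * (m / q) + 1 = N / q := by
  by_cases hd : q ∣ m
  · simp only [roundUp_of_dvd hq hd, hd, not_true_eq_false, false_and, iff_false]
    omega
  obtain ⟨b, rfl⟩ := hN
  have hr : 0 < m % q := Nat.pos_of_ne_zero (mt Nat.dvd_of_mod_eq_zero hd)
  have hrq := Nat.mod_lt m hq
  have hm := Nat.div_add_mod m q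
  rw [roundUp_eq_of_pos hq (by omega), sub_one_div_of_not_dvd hd, Nat.mul_div_cancel_left _ hq]
  simp only [hd, not_false_eq_true, true_and]
  set a := m / q
  have hab : 2 * a < b := by
    by_contra! h
    nlinarith [Nat.mul_le_mul_left q h]
  constructor
  · intro h
    by_contra hne
    nlinarith [Nat.mul_le_mul_left q (show 2 * a + 2 ≤ b by omega)]
  · rintro rfl
    nlinarith

lemma dvd_add_one_iff_mod_eq {p x : ℕ} (hp : 0 < p) : p ∣ x + 1 ↔ x % p = p - 1 := by
  have hx := Nat.div_add_mod x p
  have hr := Nat.mod_lt x hp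
  rw [show x + 1 = p * (x / p) + (x % p + 1) by omega, Nat.dvd_add_right (dvd_mul_right _ _)]
  constructor
  · intro h
    have := Nat.le_of_dvd (Nat.succ_pos _) h
    omega
  · intro h
    rw [h, Nat.sub_add_cancel hp]

lemma two_mul_add_one_eq_mul_iff {p q M : ℕ} (hp : Odd p) :
    2 * q + 1 = p * M ↔ q % p = (p - 1) / 2 ∧ 2 * (q / p) + 1 = M := by
  obtain ⟨c, rfl⟩ := hp
  have hq := Nat.div_add_mod q (2 * c + 1)
  have hr := Nat.mod_lt q (show 0 < 2 * c + 1 by omega)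
  rw [show (2 * c + 1 - 1) / 2 = c by omega]
  set a := q / (2 * c + 1)
  set r := q % (2 * c + 1)
  have hsplit : 2 * q + 1 = (2 * c + 1) * (2 * a) + (2 * r + 1) := by linarith
  constructor
  · intro h
    have hdvd : 2 * c + 1 ∣ 2 * r + 1 := by
      rw [← Nat.dvd_add_right (dvd_mul_right _ (2 * a)), ← hsplit, h]
      exact dvd_mul_right _ _
    obtain ⟨e, he⟩ := hdvd
    have he1 : e = 1 := by
      rcases e with _ | _ | e
      · omega
      · rfl
      · nlinarith
    subst he1
    refine ⟨by omega, Nat.eq_of_mul_eq_mul_left (show 0 < 2 * c + 1 by omega) ?_⟩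
    linarith
  · rintro ⟨hrc, rfl⟩
    rw [hsplit, hrc]
    ring

lemma two_mul_add_one_eq_pow_iff {p N q : ℕ} (hp : Odd p) (hq : q < p ^ N) :
    2 * q + 1 = p ^ N ↔ ∀ j < N, dig p q j = (p - 1) / 2 := by
  induction N generalizing q with
  | zero =>
    obtain rfl : q = 0 := by simpa using hq
    simp
  | succ N ih =>
    have hqp : q / p < p ^ N := by rwa [Nat.div_lt_iff_lt_mul hp.pos, ← pow_succ]
    rw [Nat.forall_lt_succ_left, dig_zero]
    simp only [dig_succ]
    rw [← ih hqp, pow_succ']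
    exact two_mul_add_one_eq_mul_iff hp

section Valuation

variable {p m t : ℕ}

lemma padicValNat_lt_of_lt_pow {n : ℕ} (hp : p.Prime) (hm : m ≠ 0) (h : m < p ^ n) :
    padicValNat p m < n := by
  have : Fact p.Prime := ⟨hp⟩
  rw [← Nat.pow_lt_pow_iff_right hp.one_lt]
  exact (Nat.le_of_dvd (Nat.pos_of_ne_zero hm) pow_padicValNat_dvd).trans_lt h

lemma pow_succ_dvd_roundUp_iff (hp : 0 < p) (hm : 0 < m) :
    p ^ (t + 1) ∣ roundUp (p ^ t) m ↔ dig p (m - 1) t = p - 1 := by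
  rw [roundUp_eq_of_pos (pow_pos hp t) hm, pow_succ, Nat.mul_dvd_mul_iff_left (pow_pos hp t),
    dvd_add_one_iff_mod_eq hp, dig]

lemma padicValNat_roundUp (hp : p.Prime) (hm : 0 < m) (hdig : dig p (m - 1) t ≠ p - 1) :
    padicValNat p (roundUp (p ^ t) m) = t := by
  have : Fact p.Prime := ⟨hp⟩
  have hq := pow_pos hp.pos t
  have hne : roundUp (p ^ t) m ≠ 0 := (hm.trans_le (le_roundUp hq)).ne'
  have h1 := (padicValNat_dvd_iff_le hne).1 dvd_roundUp
  have h2 := (padicValNat_dvd_iff_le hne).not.1 ((pow_succ_dvd_roundUp_iff hp.pos hm).not.2 hdig)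
  omega

lemma dig_sub_one_eq_iff_lt (hp : p.Prime) (hm : 0 < m) (ht : t ≤ padicValNat p m) :
    dig p (m - 1) t = p - 1 ↔ t < padicValNat p m := by
  have : Fact p.Prime := ⟨hp⟩
  have hdvd : p ^ t ∣ m := (padicValNat_dvd_iff_le hm.ne').2 ht
  rw [← pow_succ_dvd_roundUp_iff hp.pos hm, roundUp_of_dvd (pow_pos hp.pos t) hdvd,
    padicValNat_dvd_iff_le hm.ne']
  rfl

lemma dig_sub_one_of_lt (hp : p.Prime) (hm : 0 < m) (ht : padicValNat p m < t) :
    dig p (m - 1) t = dig p m t := by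
  have : Fact p.Prime := ⟨hp⟩
  have hnd : ¬ p ^ t ∣ m := fun h => by
    have := (padicValNat_dvd_iff_le hm.ne').1 h
    omega
  rw [dig, dig, sub_one_div_of_not_dvd hnd]

end Valuation

section Beta

variable {p n m : ℕ}

lemma betaCount_le : betaCount p n m ≤ n := by
  unfold betaCount
  split_ifs
  exacts [Nat.zero_le n, Nat.findGreatest_le n]

lemma le_betaCount_iff (hp : p ≠ 2) (hv : padicValNat p m < n) {c : ℕ} (hc : c ≤ n) :
    c ≤ betaCount p n m ↔
      c < n - padicValNat p m ∧ ∀ j, n - c ≤ j → j ≤ n - 1 → dig p m j = (p - 1) / 2 := by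
  rw [betaCount, if_neg hp]
  refine ⟨fun h => ?_, fun h => Nat.le_findGreatest hc h⟩
  obtain ⟨hlt, hdig⟩ := Nat.findGreatest_spec (Nat.zero_le n)
    (P := fun c => c < n - padicValNat p m ∧
      ∀ j, n - c ≤ j → j ≤ n - 1 → dig p m j = (p - 1) / 2)
    ⟨by omega, fun j _ _ => by omega⟩
  exact ⟨by omega, fun j hj hjn => hdig j (by omega) hjn⟩

lemma padicValNat_add_betaCount_lt (hv : padicValNat p m < n) :
    padicValNat p m + betaCount p n m < n := by
  by_cases hp : p = 2
  · subst hp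
    simpa [betaCount] using hv
  · have := ((le_betaCount_iff hp hv betaCount_le).1 le_rfl).1
    omega

lemma dig_ne_of_sub_betaCount_le (hp : p.Prime) (hv : padicValNat p m < n) {j : ℕ}
    (hj : n - betaCount p n m ≤ j) (hjn : j < n) : dig p m j ≠ p - 1 := by
  by_cases hp2 : p = 2
  · subst hp2
    simp only [betaCount, if_true, Nat.sub_zero] at hj
    omega
  have := hp.two_le
  rw [((le_betaCount_iff hp2 hv betaCount_le).1 le_rfl).2 j hj (by omega)]
  omega

lemma roundUp_lt_sub_iff (hp : p.Prime) (hm : 0 < m) (h2m : 2 * m < p ^ n) {t : ℕ}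
    (ht : t ≤ n) : roundUp (p ^ t) m < p ^ n - m ↔ t < n - betaCount p n m := by
  have : Fact p.Prime := ⟨hp⟩
  have hv := padicValNat_lt_of_lt_pow hp hm.ne' (by omega : m < p ^ n)
  have hq := pow_pos hp.pos t
  rw [← not_le, Nat.sub_le_iff_le_add, le_roundUp_add_iff hq (pow_dvd_pow p ht) h2m,
    Nat.pow_div ht hp.pos, padicValNat_dvd_iff_le hm.ne', not_le]
  by_cases hp2 : p = 2
  · subst hp2
    simp only [betaCount, if_true, Nat.sub_zero]
    constructor
    · intro h
      by_contra! htn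
      obtain rfl : t = n := le_antisymm ht htn
      exact h ⟨hv, by simp [Nat.div_eq_of_lt (show m < 2 ^ t by omega)]⟩
    · rintro htn ⟨-, h⟩
      have : 2 ∣ 2 ^ (n - t) := dvd_pow_self 2 (by omega)
      omega
  · have hdiv : m / p ^ t < p ^ (n - t) := by
      rw [Nat.div_lt_iff_lt_mul hq, ← pow_add, Nat.sub_add_cancel ht]
      omega
    rw [two_mul_add_one_eq_pow_iff (hp.odd_of_ne_two hp2) hdiv,
      show t < n - betaCount p n m ↔ ¬ n - t ≤ betaCount p n m by omega, not_iff_not,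
      le_betaCount_iff hp2 hv (Nat.sub_le n t)]
    refine and_congr (by omega) ⟨fun h j hj hjn => ?_, fun h j hj => ?_⟩
    · simpa [dig_div_pow, Nat.add_sub_cancel' (show t ≤ j by omega)] using h (j - t) (by omega)
    · rw [dig_div_pow]
      exact h (t + j) (by omega) (by omega)

end Beta

section Count

variable {p n m k : ℕ}

lemma admissible_iff {d w : ℕ → ℤ} {u : ℕ} (hp : p.Prime)
    (hd : ∀ s, d s = if m ≤ s then 1 else 0) (hw : ∀ s, w s = if k ≤ s then 1 else 0)
    (hu : u ≠ 0) (hun : u < p ^ n) :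
    (∀ s, s < p ^ n → s ≠ 0 → preceq p s u → d u > d (u - s) + w s) ↔
      m ≤ u ∧ u < k ∧ u < m + p ^ padicValNat p u := by
  have : Fact p.Prime := ⟨hp⟩
  have hdvd : p ^ padicValNat p u ∣ u := pow_padicValNat_dvd
  have hpos : 0 < p ^ padicValNat p u := pow_pos hp.pos _
  have hle : p ^ padicValNat p u ≤ u := Nat.le_of_dvd (Nat.pos_of_ne_zero hu) hdvd
  constructor
  · intro h
    have hself := h u hun hu fun _ => le_rfl
    have hpow := h _ (hle.trans_lt hun) hpos.ne' (preceq_pow_padicValNat hp hu)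
    simp only [hd, hw, Nat.sub_self] at hself hpow
    split_ifs at hself hpow <;> omega
  · rintro ⟨hmu, huk, hup⟩ s - hs hsu
    have hsle : s ≤ u := le_of_preceq hp.one_lt hsu
    have hps : p ^ padicValNat p u ≤ s :=
      Nat.le_of_dvd (Nat.pos_of_ne_zero hs) (pow_dvd_of_preceq hsu hdvd)
    simp only [hd, hw]
    split_ifs <;> omega

open Classical in
lemma filter_admissible_eq_insert_image (hp : p.Prime) (hm : 0 < m) (h2m : 2 * m < p ^ n) {d w : ℕ → ℤ}
    (hd : ∀ s, d s = if m ≤ s then 1 else 0) (hw : ∀ s, w s = if p ^ n - m ≤ s then 1 else 0) :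
    {u ∈ range (p ^ n) | ∀ s, s < p ^ n → s ≠ 0 → preceq p s u → d u > d (u - s) + w s} =
      insert 0 ({t ∈ range (n - betaCount p n m) | dig p (m - 1) t ≠ p - 1}.image
        fun t => roundUp (p ^ t) m) := by
  ext u
  rcases eq_or_ne u 0 with rfl | hu
  · simp only [mem_filter, mem_range, mem_insert, true_or, iff_true, pow_pos hp.pos, true_and]
    exact fun s _ hs hs0 => absurd (Nat.le_zero.1 (le_of_preceq hp.one_lt hs0)) hs
  simp only [mem_filter, mem_range, mem_insert, hu, false_or, mem_image]
  constructor
  · rintro ⟨hun, hadm⟩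
    obtain ⟨hmu, huk, hup⟩ := (admissible_iff hp hd hw hu hun).1 hadm
    have : Fact p.Prime := ⟨hp⟩
    have hv := padicValNat_lt_of_lt_pow hp hu hun
    have hround := eq_roundUp (pow_pos hp.pos _) pow_padicValNat_dvd hmu hup
    refine ⟨padicValNat p u, ⟨?_, fun hdig => ?_⟩, hround.symm⟩
    · rw [← roundUp_lt_sub_iff hp hm h2m hv.le, ← hround]
      exact huk
    · have := (pow_succ_dvd_roundUp_iff hp.pos hm).2 hdig
      rw [← hround] at this
      exact pow_succ_padicValNat_not_dvd hu this
  · rintro ⟨t, ⟨htn, hdig⟩, rfl⟩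
    have huk := (roundUp_lt_sub_iff hp hm h2m (by omega)).2 htn
    refine ⟨by omega, (admissible_iff hp hd hw hu (by omega)).2 ⟨le_roundUp (pow_pos hp.pos t),
      huk, ?_⟩⟩
    rw [padicValNat_roundUp hp hm hdig]
    exact roundUp_lt_add (pow_pos hp.pos t)

lemma card_filter_dig_sub_one_ne (hp : p.Prime) (hm : 0 < m) (hv : padicValNat p m < n) :
    #{t ∈ range n | dig p (m - 1) t ≠ p - 1} = alphaCount p n m + 1 := by
  have hsplit : range n = range (padicValNat p m + 1) ∪ Ioc (padicValNat p m) (n - 1) := by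
    ext t
    simp only [mem_union, mem_range, mem_Ioc]
    omega
  have hlow : {t ∈ range (padicValNat p m + 1) | dig p (m - 1) t ≠ p - 1} =
      {padicValNat p m} := by
    ext t
    simp only [mem_filter, mem_range, mem_singleton]
    refine ⟨fun ⟨ht, hdig⟩ => ?_, fun ht => ⟨by omega, ?_⟩⟩
    · by_contra hne
      exact hdig ((dig_sub_one_eq_iff_lt hp hm (by omega)).2 (by omega))
    · rw [ne_eq, dig_sub_one_eq_iff_lt hp hm ht.le]
      omega
  have hhigh : {t ∈ Ioc (padicValNat p m) (n - 1) | dig p (m - 1) t ≠ p - 1} =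
      {t ∈ Ioc (padicValNat p m) (n - 1) | dig p m t ≠ p - 1} :=
    filter_congr fun t ht => by rw [dig_sub_one_of_lt hp hm (mem_Ioc.1 ht).1]
  rw [hsplit, filter_union, card_union_of_disjoint (disjoint_filter_filter ?_), hlow, hhigh,
    card_singleton, alphaCount, add_comm]
  rw [disjoint_left]
  simp only [mem_range, mem_Ioc]
  omega

lemma card_filter_dig_sub_one_ne_add_betaCount (hp : p.Prime) (hm : 0 < m)
    (hv : padicValNat p m < n) :
    #{t ∈ range (n - betaCount p n m) | dig p (m - 1) t ≠ p - 1} + betaCount p n m =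
      #{t ∈ range n | dig p (m - 1) t ≠ p - 1} := by
  have hβ := padicValNat_add_betaCount_lt hv
  have hsplit : range n = range (n - betaCount p n m) ∪ Ico (n - betaCount p n m) n := by
    ext t
    simp only [mem_union, mem_range, mem_Ico]
    omega
  have htop : {t ∈ Ico (n - betaCount p n m) n | dig p (m - 1) t ≠ p - 1} =
      Ico (n - betaCount p n m) n :=
    filter_true_of_mem fun j hj => by
      rw [mem_Ico] at hj
      rw [dig_sub_one_of_lt hp hm (by omega)]
      exact dig_ne_of_sub_betaCount_le hp hv hj.1 hj.2
  rw [hsplit, filter_union, card_union_of_disjoint (disjoint_filter_filter ?_), htop,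
    Nat.card_Ico, Nat.sub_sub_self betaCount_le]
  rw [disjoint_left]
  simp only [mem_range, mem_Ico]
  omega

end Count

open Classical in
theorem stmt_12_general (p n : ℕ) (hp : p.Prime) (h : ℕ)
    (hh1 : 2 ≤ h) (hh2 : 2 * h < p ^ n + 2)
    (m k : ℕ) (hm : m = h - 1) (hk : k = p ^ n - m)
    (d w : ℕ → ℤ)
    (hd : ∀ s, d s = if m ≤ s then 1 else 0)
    (hw : ∀ s, w s = if k ≤ s then 1 else 0) :
    (((Finset.range (p ^ n)).filter (fun u =>
        ∀ s, s < p ^ n → s ≠ 0 → preceq p s u → d u > d (u - s) + w s)).card : ℤ)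
      = 2 + alphaCount p n m - betaCount p n m := by
  have hm0 : 0 < m := by omega
  have h2m : 2 * m < p ^ n := by omega
  have hv := padicValNat_lt_of_lt_pow hp hm0.ne' (by omega : m < p ^ n)
  subst hk
  rw [filter_admissible_eq_insert_image hp hm0 h2m hd hw, card_insert_of_notMem, card_image_of_injOn]
  · have := card_filter_dig_sub_one_ne_add_betaCount hp hm0 hv
    have := card_filter_dig_sub_one_ne hp hm0 hv
    push_cast
    omega
  · intro a ha b hb hab
    simpa only [padicValNat_roundUp hp hm0 (mem_filter.1 ha).2,
      padicValNat_roundUp hp hm0 (mem_filter.1 hb).2] using congrArg (padicValNat p) hab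
  · simp only [mem_image, not_exists, not_and]
    exact fun t _ h0 => (le_roundUp (pow_pos hp.pos t)).not_gt (h0 ▸ hm0)

open Classical in
theorem stmt_12 (p n : ℕ) (hp : p.Prime) (hn : 1 ≤ n) (h : ℕ)
    (hh1 : 2 ≤ h) (hh2 : 2 * h < p ^ n + 2)
    (m k : ℕ) (hm : m = h - 1) (hk : k = p ^ n - m)
    (d w : ℕ → ℤ)
    (hd : ∀ s, d s = if m ≤ s then 1 else 0)
    (hw : ∀ s, w s = if k ≤ s then 1 else 0) :
    (((Finset.range (p ^ n)).filter (fun u =>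
        ∀ s, s < p ^ n → s ≠ 0 → preceq p s u → d u > d (u - s) + w s)).card : ℤ)
      = 2 + alphaCount p n m - betaCount p n m :=
  stmt_12_general p n hp h hh1 hh2 m k hm hk d w hd hw
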